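/- Let G be a finite group and ∅ ≠ A ⊆ G. Let φ₁, φ₂ : G → ℝ satisfy Σ_{x∈G} φ₁(x) + Σ_{x∈G} φ₂(x) = 0. Then Σ_{a∈A} Σ_{x∈G} φ₁(x)·φ₂(x⁻¹a) ≤ ν(A)·‖φ₁‖₂·‖φ₂‖₂, where ‖φ‖₂ = (Σ_{x∈G} φ(x)²)^{1/2}. -/

import Mathlib

open Finset

namespace BCC

/-! ### Simplicial cochain machinery.

A finite simplicial complex on a linearly ordered finite vertex type `V` is encoded as a
`Finset (Finset V)` of faces (downward closure is assumed as a hypothesis where needed;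
the empty face plays the role of the `(-1)`-dimensional simplex, so that the cochain
complex below is the *augmented* (reduced) one).

A skew-symmetric real-valued function on ordered `j`-simplices is determined by its values
on the increasingly-ordered simplices, so `C^j(X)` is encoded as the space of real functions
on the faces of cardinality `j+1`.  Thus `Cochain X m` is `C^{m-1}(X)`, and `d X m` is the
coboundary `d_{m-1} : C^{m-1}(X) → C^m(X)`; in particular `d X 0` is the augmentation
`d_{-1} : C^{-1}(X) = ℝ → C^0(X)`, `(d_{-1} a)(v) = a`.  `dStar X m` is the adjoint of
`d X m` with respect to the standard inner products `(φ, ψ) = ∑_{σ ∈ X(j)} φ(σ)ψ(σ)`,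
written out explicitly. -/

/-- `C^{m-1}(X)`: real cochains supported on the faces of cardinality `m`. -/
abbrev Cochain {V : Type*} [Fintype V] [LinearOrder V] (X : Finset (Finset V)) (m : ℕ) :
    Type _ :=
  {s : Finset V // s ∈ X ∧ s.card = m} → ℝ

section Ordered
variable {V : Type*} [Fintype V] [LinearOrder V]

/-- The sign `(-1)^i` of the vertex `v` in the increasingly ordered simplex `σ`,
where `i` is the position of `v` in `σ`. -/
noncomputable def sgn (σ : Finset V) (v : V) : ℝ :=
  (-1 : ℝ) ^ (σ.filter fun w => w < v).card

/-- The simplicial coboundary `d_{m-1} : C^{m-1}(X) → C^m(X)`,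
`(dφ)(σ) = ∑_{i} (-1)^i φ(σ_i)`. -/
noncomputable def d (X : Finset (Finset V)) (m : ℕ) :
    Cochain X m →ₗ[ℝ] Cochain X (m + 1) where
  toFun φ := fun σ => ∑ v ∈ σ.1, sgn σ.1 v *
    (if h : σ.1.erase v ∈ X ∧ (σ.1.erase v).card = m then φ ⟨σ.1.erase v, h⟩ else 0)
  map_add' φ ψ := by
    funext σ
    show (∑ v ∈ σ.1, (_ : ℝ)) = (∑ v ∈ σ.1, (_ : ℝ)) + (∑ v ∈ σ.1, (_ : ℝ))
    rw [← Finset.sum_add_distrib]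
    refine Finset.sum_congr rfl fun v hv => ?_
    split
    · show sgn σ.1 v * (φ _ + ψ _) = _; ring
    · ring
  map_smul' c φ := by
    funext σ
    show (∑ v ∈ σ.1, _) = c * (∑ v ∈ σ.1, _)
    rw [Finset.mul_sum]
    refine Finset.sum_congr rfl fun v hv => ?_
    split
    · show sgn σ.1 v * (c * φ _) = _; ring
    · ring

/-- The adjoint `d_{m-1}^* : C^m(X) → C^{m-1}(X)` of the coboundary `d X m` with respect to
the standard inner products, written out explicitly:
`(d^*ψ)(τ) = ∑_{v ∉ τ, τ ∪ {v} ∈ X} ± ψ(τ ∪ {v})`. -/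
noncomputable def dStar (X : Finset (Finset V)) (m : ℕ) :
    Cochain X (m + 1) →ₗ[ℝ] Cochain X m where
  toFun ψ := fun τ => ∑ v ∈ τ.1ᶜ, sgn (insert v τ.1) v *
    (if h : insert v τ.1 ∈ X ∧ (insert v τ.1).card = m + 1 then ψ ⟨insert v τ.1, h⟩ else 0)
  map_add' φ ψ := by
    funext τ
    show (∑ v ∈ τ.1ᶜ, (_ : ℝ)) = (∑ v ∈ τ.1ᶜ, (_ : ℝ)) + (∑ v ∈ τ.1ᶜ, (_ : ℝ))
    rw [← Finset.sum_add_distrib]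
    refine Finset.sum_congr rfl fun v hv => ?_
    split
    · show sgn _ v * (φ _ + ψ _) = _; ring
    · ring
  map_smul' c φ := by
    funext τ
    show (∑ v ∈ τ.1ᶜ, _) = c * (∑ v ∈ τ.1ᶜ, _)
    rw [Finset.mul_sum]
    refine Finset.sum_congr rfl fun v hv => ?_
    split
    · show sgn _ v * (c * φ _) = _; ring
    · ring

/-- The squared norm `‖φ‖² = ∑_{σ ∈ X(j)} φ(σ)²` of a cochain. -/
noncomputable def normSq {X : Finset (Finset V)} {m : ℕ} (φ : Cochain X m) : ℝ :=
  ∑ s, φ s ^ 2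

/-- The reduced `m`-th Laplacian `L_m = d_{m-1} d_{m-1}^* + d_m^* d_m`
acting on `C^m(X) = Cochain X (m+1)`. -/
noncomputable def Lap (X : Finset (Finset V)) (m : ℕ) :
    Cochain X (m + 1) →ₗ[ℝ] Cochain X (m + 1) :=
  (d X m) ∘ₗ (dStar X m) + (dStar X (m + 1)) ∘ₗ (d X (m + 1))

/-- The `m`-th spectral gap `μ_m(X)`: the minimal eigenvalue of the reduced `m`-th
Laplacian `L_m` acting on `C^m(X)`. -/
noncomputable def mu (X : Finset (Finset V)) (m : ℕ) : ℝ :=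
  sInf {μ : ℝ | Module.End.HasEigenvalue (Lap X m) μ}

/-- The dimension of the `j`-th reduced real cohomology `H̃^j(X;ℝ) = ker d_j / im d_{j-1}`
of the augmented cochain complex of `X`. -/
noncomputable def cohomDim (X : Finset (Finset V)) (j : ℕ) : ℕ :=
  Module.finrank ℝ
    (↥(LinearMap.ker (d X (j + 1))) ⧸
      (LinearMap.range (d X j)).comap (LinearMap.ker (d X (j + 1))).subtype)

/-! ### Links and `λ₂` of link graphs -/

/-- The vertex set of the link `lk(X,τ)` of the face `τ`. -/
def linkVerts (X : Finset (Finset V)) (τ : Finset V) : Finset V :=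
  univ.filter (fun v => v ∉ τ ∧ insert v τ ∈ X)

/-- The Dirichlet energy `‖d₀ f‖² = ∑_{{u,v} ∈ lk(X,τ)(1)} (f v - f u)²` of a function `f`
on the vertices of the link graph `lk(X,τ)` (each unordered edge counted once). -/
noncomputable def linkEnergy (X : Finset (Finset V)) (τ : Finset V) (f : V → ℝ) : ℝ :=
  (1 / 2) * ∑ u : V, ∑ v : V,
    if u ≠ v ∧ u ∉ τ ∧ v ∉ τ ∧ insert u (insert v τ) ∈ X then (f v - f u) ^ 2 else 0

/-- The second smallest eigenvalue `λ₂` of the Laplacian of the link graph `lk(X,τ)`,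
via its variational characterization: the infimum of the Rayleigh quotients
`‖d₀ f‖²/‖f‖²` over nonzero functions `f` on the link vertices with `∑_v f(v) = 0`. -/
noncomputable def linkLambda2 (X : Finset (Finset V)) (τ : Finset V) : ℝ :=
  sInf {r : ℝ | ∃ f : V → ℝ, (∀ v, v ∉ linkVerts X τ → f v = 0) ∧ (∑ v, f v) = 0 ∧
    f ≠ 0 ∧ r = linkEnergy X τ f / ∑ v, f v ^ 2}

/-- The localization `φ_τ` of a cochain `φ ∈ C^{m-1}(X)` to the link of a face `τ` with
`|τ| = m - 1` : `φ_τ(v) = φ(vτ)` (expressed through the chosen increasing orientations). -/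
noncomputable def restrictLink (X : Finset (Finset V)) {m : ℕ} (φ : Cochain X m)
    (τ : Finset V) : V → ℝ :=
  fun v => if h : v ∉ τ ∧ insert v τ ∈ X ∧ (insert v τ).card = m then
    sgn (insert v τ) v * φ ⟨insert v τ, h.2.1, h.2.2⟩ else 0

end Ordered

section Graphs
variable {V : Type*} [DecidableEq V]

/-- The link `lk(X,τ)` of a codimension-2 face, as a simple graph on its vertex set. -/
def linkGraph (X : Finset (Finset V)) (τ : Finset V) :
    SimpleGraph {v : V // v ∉ τ ∧ insert v τ ∈ X} where
  Adj u v := u ≠ v ∧ insert u.1 (insert v.1 τ) ∈ X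
  symm := ⟨by
    rintro u v ⟨h1, h2⟩
    exact ⟨h1.symm, by rwa [Finset.insert_comm] at h2⟩⟩
  loopless := ⟨fun u h => h.1 rfl⟩

/-- The bipartite Cayley graph `C_A` on `{1,2} × G` (encoded as `Fin 2 × G`), with an edge
between `(1,x₁)` and `(2,x₂)` whenever `x₁ x₂ ∈ A`. -/
def cayleyGraph (G : Type*) [Group G] [DecidableEq G] (A : Finset G) :
    SimpleGraph (Fin 2 × G) where
  Adj u v := (u.1 = 0 ∧ v.1 = 1 ∧ u.2 * v.2 ∈ A) ∨ (v.1 = 0 ∧ u.1 = 1 ∧ v.2 * u.2 ∈ A)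
  symm := ⟨by tauto⟩
  loopless := ⟨by
    rintro ⟨i, x⟩ (⟨h0, h1, -⟩ | ⟨h0, h1, -⟩) <;> rw [h0] at h1 <;> exact absurd h1 (by decide)⟩

/-- The disjoint union of `ℓ` copies of a graph `H`. -/
def copies (ℓ : ℕ) {α : Type*} (H : SimpleGraph α) : SimpleGraph (Fin ℓ × α) where
  Adj u v := u.1 = v.1 ∧ H.Adj u.2 v.2
  symm := ⟨by rintro u v ⟨h1, h2⟩; exact ⟨h1.symm, h2.symm⟩⟩
  loopless := ⟨fun u h => H.loopless.irrefl u.2 h.2⟩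

end Graphs

/-! ### The complexes `Y_{G,k}` and `Y_{A,k}` -/

/-- The balanced complex `Y_{G,k}`, i.e. the simplicial join `V_1 * ⋯ * V_{k+1}` where
`V_i = {i} × G`: its faces are exactly the subsets of `Fin (k+1) × G` containing at most one
vertex of each colour `i : Fin (k+1)`. -/
def YG (G : Type*) [Fintype G] [DecidableEq G] (k : ℕ) :
    Finset (Finset (Fin (k + 1) × G)) :=
  (univ : Finset (Finset (Fin (k + 1) × G))).filter
    (fun s => ∀ x ∈ s, ∀ y ∈ s, Prod.fst x = Prod.fst y → x = y)

/-- The balanced `k`-dimensional Cayley complex `Y_{A,k}`: the full `(k-1)`-skeleton of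
`Y_{G,k}` together with all `k`-simplices `{(1,x_1),…,(k+1,x_{k+1})}` such that
`x_1 ⋯ x_{k+1} ∈ A` (the ordered product is taken along the colours `1,…,k+1`). -/
def YA (G : Type*) [Group G] [Fintype G] [DecidableEq G] (k : ℕ) (A : Finset G) :
    Finset (Finset (Fin (k + 1) × G)) :=
  (YG G k).filter (fun s => s.card ≤ k ∨
    ∃ x : Fin (k + 1) → G, s = univ.image (fun i => (i, x i)) ∧ (List.ofFn x).prod ∈ A)

/-! ### Unitary representations, `ν(A)` and `D(G)` -/

variable {G : Type*} [Group G]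

/-- A unitary matrix representation `ρ : G → U(d)` is irreducible if `d > 0` and the only
invariant subspaces of `ℂ^d` are `⊥` and `⊤`. -/
def IsIrred {d : ℕ} (ρ : G →* Matrix.unitaryGroup (Fin d) ℂ) : Prop :=
  0 < d ∧ ∀ W : Submodule ℂ (EuclideanSpace ℂ (Fin d)),
    (∀ g : G, ∀ v ∈ W, Matrix.toEuclideanLin (ρ g : Matrix (Fin d) (Fin d) ℂ) v ∈ W) →
      W = ⊥ ∨ W = ⊤

/-- A matrix representation is nontrivial if it is not identically the identity. -/
def IsNontrivialRep {d : ℕ} (ρ : G →* Matrix.unitaryGroup (Fin d) ℂ) : Prop :=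
  ∃ g : G, (ρ g : Matrix (Fin d) (Fin d) ℂ) ≠ 1

/-- The operator (spectral) norm of a complex `d × d` matrix. -/
noncomputable def opNorm {d : ℕ} (M : Matrix (Fin d) (Fin d) ℂ) : ℝ :=
  ‖Matrix.toEuclideanCLM (𝕜 := ℂ) M‖

/-- The Fourier transform `1̂_A(ρ) = ∑_{x ∈ A} ρ(x)` of the indicator of `A` at `ρ`. -/
noncomputable def fourier {d : ℕ} (ρ : G →* Matrix.unitaryGroup (Fin d) ℂ) (A : Finset G) :
    Matrix (Fin d) (Fin d) ℂ :=
  ∑ a ∈ A, (ρ a : Matrix (Fin d) (Fin d) ℂ)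

/-- `ν(A) = max_{ρ ∈ Ĝ₊} ‖1̂_A(ρ)‖`: the supremum of the operator norms `‖∑_{x ∈ A} ρ(x)‖`
over all nontrivial irreducible unitary matrix representations of `G` (this agrees with the
maximum over any complete set `Ĝ₊` of pairwise inequivalent nontrivial irreducible unitary
representations, since equivalent irreducible unitary representations are unitarily
equivalent and hence give the same norm). -/
noncomputable def nu (G : Type*) [Group G] (A : Finset G) : ℝ :=
  sSup {x : ℝ | ∃ (d : ℕ) (ρ : G →* Matrix.unitaryGroup (Fin d) ℂ),
    IsIrred ρ ∧ IsNontrivialRep ρ ∧ x = opNorm (fourier ρ A)}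

/-- Equivalence of two unitary matrix representations: an invertible intertwiner. -/
def RepEquiv {d₁ d₂ : ℕ} (ρ₁ : G →* Matrix.unitaryGroup (Fin d₁) ℂ)
    (ρ₂ : G →* Matrix.unitaryGroup (Fin d₂) ℂ) : Prop :=
  ∃ T : Matrix (Fin d₂) (Fin d₁) ℂ, Function.Bijective T.mulVecLin ∧
    ∀ g : G, T * (ρ₁ g : Matrix (Fin d₁) (Fin d₁) ℂ) = (ρ₂ g : Matrix (Fin d₂) (Fin d₂) ℂ) * T

/-- `(dims, ρs)` is a complete family of irreducible unitary representations of `G`: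
each member is irreducible, they are pairwise inequivalent, and every irreducible unitary
matrix representation of `G` is equivalent to some member.  Such a family realizes `Ĝ`,
and the sum of the degrees of the irreducible representations is `D(G) = ∑ i, dims i`. -/
def IsCompleteIrrepFamily (G : Type*) [Group G] {ι : Type} (dims : ι → ℕ)
    (ρs : ∀ i : ι, G →* Matrix.unitaryGroup (Fin (dims i)) ℂ) : Prop :=
  (∀ i, IsIrred (ρs i)) ∧
  (∀ i j, i ≠ j → ¬ RepEquiv (ρs i) (ρs j)) ∧
  (∀ (d : ℕ) (π : G →* Matrix.unitaryGroup (Fin d) ℂ), IsIrred π → ∃ i, RepEquiv π (ρs i))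

end BCC

open BCC

/-!
Writing `R` for the right regular representation of `G` on `ℓ²(G)` and `φ̌₁(x) = φ₁(x⁻¹)`, the
left side is `⟪φ̌₁, ∑_{a ∈ A} R(a) φ₂⟫`. Subtracting its mean `m` from `φ₂` does not increase
`‖φ₂‖₂` and changes the left side by `|A| m ∑ φ₁`, which is `-|A| (∑ φ₁)² / |G| ≤ 0` because
`∑ φ₂ = -∑ φ₁`; so one may assume `∑ φ₂ = 0`. On mean-zero functions `R` has no nonzero fixed
vectors, and a finite-dimensional unitary representation without fixed vectors splits orthogonally
into nontrivial irreducible pieces. On each piece the operator `∑_{a ∈ A} R(a)` is, in an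
orthonormal basis, `1̂_A(ρ)` for some `ρ ∈ Ĝ₊`, so it has norm at most `ν(A)`; Pythagoras
reassembles the pieces.
-/

namespace BCC

section UnitaryRepresentation

variable {G : Type*} [Group G] {H : Type*} [NormedAddCommGroup H] [InnerProductSpace ℂ H]

def IsInvariantSubspace (π : G →* (H ≃ₗᵢ[ℂ] H)) (U : Submodule ℂ H) : Prop :=
  ∀ g, ∀ v ∈ U, π g v ∈ U

lemma apply_apply_inv (π : G →* (H ≃ₗᵢ[ℂ] H)) (g : G) (v : H) : π g (π g⁻¹ v) = v := by
  rw [map_inv, LinearIsometryEquiv.coe_inv, LinearIsometryEquiv.apply_symm_apply]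

variable {π : G →* (H ≃ₗᵢ[ℂ] H)} {U : Submodule ℂ H}

lemma IsInvariantSubspace.map_eq (hU : IsInvariantSubspace π U) (g : G) :
    U.map ((π g).toLinearEquiv : H →ₗ[ℂ] H) = U :=
  le_antisymm (Submodule.map_le_iff_le_comap.mpr fun v hv => hU g v hv)
    fun v hv => ⟨π g⁻¹ v, hU g⁻¹ v hv, apply_apply_inv π g v⟩

lemma IsInvariantSubspace.orthogonal (hU : IsInvariantSubspace π U) :
    IsInvariantSubspace π Uᗮ := by
  intro g v hv
  rw [Submodule.mem_orthogonal] at hv ⊢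
  intro u hu
  rw [← apply_apply_inv π g u, LinearIsometryEquiv.inner_map_map]
  exact hv _ (hU g⁻¹ u hu)

def IsInvariantSubspace.restrict (hU : IsInvariantSubspace π U) : G →* (U ≃ₗᵢ[ℂ] U) where
  toFun g := { (π g).toLinearEquiv.ofSubmodules U U (hU.map_eq g) with
    norm_map' := fun x => (π g).norm_map x }
  map_one' := by ext x; simp
  map_mul' g h := by ext x; exact congr($(map_mul π g h) (x : H))

@[simp]
lemma IsInvariantSubspace.coe_restrict_apply (hU : IsInvariantSubspace π U) (g : G) (x : U) :
    (hU.restrict g x : H) = π g x :=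
  rfl

lemma IsInvariantSubspace.norm_sum_restrict_apply (hU : IsInvariantSubspace π U) (A : Finset G)
    (x : U) : ‖∑ a ∈ A, hU.restrict a x‖ = ‖∑ a ∈ A, π a x‖ := by
  rw [Submodule.coe_norm, Submodule.coe_sum]
  rfl

lemma IsInvariantSubspace.restrict_eq_zero_of_fixed (hU : IsInvariantSubspace π U)
    (hfix : ∀ v, (∀ g, π g v = v) → v = 0) (x : U) (hx : ∀ g, hU.restrict g x = x) : x = 0 :=
  Subtype.ext <| hfix x fun g => congrArg Subtype.val (hx g)

variable [FiniteDimensional ℂ H] {ι : Type*} [Fintype ι] [DecidableEq ι]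

noncomputable def unitaryMatrixRep (b : OrthonormalBasis ι ℂ H) (π : G →* (H ≃ₗᵢ[ℂ] H)) :
    G →* Matrix.unitaryGroup ι ℂ :=
  (Unitary.map (StarMonoidHom.ofClass
      (b.repr.conjStarAlgEquiv.trans Matrix.toEuclideanCLM.symm))).toMonoidHom.comp
    (Unitary.linearIsometryEquiv.symm.toMonoidHom.comp π)

lemma toEuclideanLin_unitaryMatrixRep (b : OrthonormalBasis ι ℂ H) (g : G) (v : H) :
    Matrix.toEuclideanLin (unitaryMatrixRep b π g : Matrix ι ι ℂ) (b.repr v) =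
      b.repr (π g v) := by
  rw [← Matrix.coe_toEuclideanCLM_eq_toEuclideanLin]
  simp [unitaryMatrixRep]

end UnitaryRepresentation

lemma norm_toEuclideanCLM_unitary_le_one {ι : Type*} [Fintype ι] [DecidableEq ι]
    (U : Matrix.unitaryGroup ι ℂ) :
    ‖Matrix.toEuclideanCLM (𝕜 := ℂ) (U : Matrix ι ι ℂ)‖ ≤ 1 := by
  have hU := Unitary.map_mem (Matrix.toEuclideanCLM (𝕜 := ℂ) (n := ι)) U.2
  exact ContinuousLinearMap.opNorm_le_bound _ zero_le_one fun x =>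
    by rw [Unitary.norm_map ⟨_, hU⟩ x, one_mul]

section Nu

variable {G : Type*} [Group G] {d : ℕ}

lemma opNorm_fourier_le_card (ρ : G →* Matrix.unitaryGroup (Fin d) ℂ) (A : Finset G) :
    opNorm (fourier ρ A) ≤ #A := by
  rw [opNorm, BCC.fourier, map_sum]
  refine (norm_sum_le _ _).trans ?_
  simpa using sum_le_sum fun a _ => norm_toEuclideanCLM_unitary_le_one (ρ a)

lemma opNorm_fourier_le_nu {ρ : G →* Matrix.unitaryGroup (Fin d) ℂ} (hρ : IsIrred ρ)
    (hnt : IsNontrivialRep ρ) (A : Finset G) : opNorm (fourier ρ A) ≤ nu G A :=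
  le_csSup ⟨#A, by rintro _ ⟨d, ρ, -, -, rfl⟩; exact opNorm_fourier_le_card ρ A⟩
    ⟨d, ρ, hρ, hnt, rfl⟩

lemma nu_nonneg (A : Finset G) : 0 ≤ nu G A :=
  Real.sSup_nonneg <| by rintro _ ⟨d, ρ, -, -, rfl⟩; exact norm_nonneg _

end Nu

section IrreducibleCase

variable {G : Type*} [Group G] {H : Type*} [NormedAddCommGroup H] [InnerProductSpace ℂ H]
  [FiniteDimensional ℂ H] {π : G →* (H ≃ₗᵢ[ℂ] H)} {d : ℕ}

lemma isIrred_unitaryMatrixRep [Nontrivial H] (b : OrthonormalBasis (Fin d) ℂ H)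
    (hirr : ∀ U, IsInvariantSubspace π U → U = ⊥ ∨ U = ⊤) :
    IsIrred (unitaryMatrixRep b π) := by
  refine ⟨Fin.pos_iff_nonempty.mpr b.toBasis.index_nonempty, fun W hW => ?_⟩
  have hU : IsInvariantSubspace π (W.comap b.repr.toLinearEquiv.toLinearMap) := fun g v hv => by
    simpa [← toEuclideanLin_unitaryMatrixRep] using hW g _ hv
  rcases hirr _ hU with h | h
  · refine Or.inl (W.eq_bot_iff.mpr fun w hw => ?_)
    have : b.repr.symm w ∈ W.comap b.repr.toLinearEquiv.toLinearMap := by simpa using hw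
    simpa [h] using this
  · refine Or.inr (W.eq_top_iff'.mpr fun w => ?_)
    have : b.repr.symm w ∈ W.comap b.repr.toLinearEquiv.toLinearMap := h ▸ Submodule.mem_top
    simpa using this

lemma isNontrivialRep_unitaryMatrixRep (b : OrthonormalBasis (Fin d) ℂ H) (hnt : ∃ g, π g ≠ 1) :
    IsNontrivialRep (unitaryMatrixRep b π) := by
  obtain ⟨g, hg⟩ := hnt
  refine ⟨g, fun h => hg (LinearIsometryEquiv.ext fun v => b.repr.injective ?_)⟩
  simp [← toEuclideanLin_unitaryMatrixRep, h]

lemma norm_sum_apply_le_opNorm_fourier (b : OrthonormalBasis (Fin d) ℂ H) (A : Finset G)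
    (v : H) : ‖∑ a ∈ A, π a v‖ ≤ opNorm (fourier (unitaryMatrixRep b π) A) * ‖v‖ := by
  have h : b.repr (∑ a ∈ A, π a v) =
      Matrix.toEuclideanCLM (𝕜 := ℂ) (fourier (unitaryMatrixRep b π) A) (b.repr v) := by
    rw [BCC.fourier, map_sum, map_sum, _root_.sum_apply]
    exact sum_congr rfl fun a _ => (toEuclideanLin_unitaryMatrixRep b a v).symm
  rw [← b.repr.norm_map, h, ← b.repr.norm_map v]
  exact ContinuousLinearMap.le_opNorm _ _

lemma norm_sum_le_nu_mul_of_irreducible [Nontrivial H]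
    (hirr : ∀ U, IsInvariantSubspace π U → U = ⊥ ∨ U = ⊤) (hnt : ∃ g, π g ≠ 1)
    (A : Finset G) (v : H) : ‖∑ a ∈ A, π a v‖ ≤ nu G A * ‖v‖ := by
  set b := stdOrthonormalBasis ℂ H
  calc ‖∑ a ∈ A, π a v‖ ≤ opNorm (fourier (unitaryMatrixRep b π) A) * ‖v‖ :=
        norm_sum_apply_le_opNorm_fourier b A v
    _ ≤ nu G A * ‖v‖ := by
        gcongr
        exact opNorm_fourier_le_nu (isIrred_unitaryMatrixRep b hirr)
          (isNontrivialRep_unitaryMatrixRep b hnt) A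

end IrreducibleCase

lemma norm_add_le_mul_of_inner_eq_zero {𝕜 E : Type*} [RCLike 𝕜] [NormedAddCommGroup E]
    [InnerProductSpace 𝕜 E] {x₁ x₂ y₁ y₂ : E} {c : ℝ} (hc : 0 ≤ c)
    (hx : inner 𝕜 x₁ x₂ = 0) (hy : inner 𝕜 y₁ y₂ = 0)
    (h₁ : ‖y₁‖ ≤ c * ‖x₁‖) (h₂ : ‖y₂‖ ≤ c * ‖x₂‖) : ‖y₁ + y₂‖ ≤ c * ‖x₁ + x₂‖ := by
  have hx' := norm_add_sq_eq_norm_sq_add_norm_sq_of_inner_eq_zero x₁ x₂ hx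
  have hy' := norm_add_sq_eq_norm_sq_add_norm_sq_of_inner_eq_zero y₁ y₂ hy
  rw [← pow_le_pow_iff_left₀ (norm_nonneg _) (by positivity) two_ne_zero]
  calc ‖y₁ + y₂‖ ^ 2 = ‖y₁‖ ^ 2 + ‖y₂‖ ^ 2 := by rw [sq, hy', sq, sq]
    _ ≤ (c * ‖x₁‖) ^ 2 + (c * ‖x₂‖) ^ 2 := by gcongr
    _ = (c * ‖x₁ + x₂‖) ^ 2 := by linear_combination (-c ^ 2) * hx'

section Decomposition

variable {G : Type*} [Group G] {H : Type*} [NormedAddCommGroup H] [InnerProductSpace ℂ H]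

theorem norm_sum_le_nu_mul [FiniteDimensional ℂ H] (π : G →* (H ≃ₗᵢ[ℂ] H))
    (hfix : ∀ v, (∀ g, π g v = v) → v = 0) (A : Finset G) (v : H) :
    ‖∑ a ∈ A, π a v‖ ≤ nu G A * ‖v‖ := by
  induction h : Module.finrank ℂ H using Nat.strong_induction_on generalizing H with
  | _ n ih =>
  by_cases hred : ∃ U, IsInvariantSubspace π U ∧ U ≠ ⊥ ∧ U ≠ ⊤
  · obtain ⟨U, hU, hbot, htop⟩ := hred
    have hU' := hU.orthogonal
    have hp := ih _ (h ▸ Submodule.finrank_lt htop) hU.restrict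
      (hU.restrict_eq_zero_of_fixed hfix) ⟨_, U.starProjection_apply_mem v⟩ rfl
    have hw := ih _ (h ▸ Submodule.finrank_lt (by rwa [Ne, U.orthogonal_eq_top_iff]))
      hU'.restrict (hU'.restrict_eq_zero_of_fixed hfix)
      ⟨_, Uᗮ.starProjection_apply_mem v⟩ rfl
    rw [hU.norm_sum_restrict_apply] at hp
    rw [hU'.norm_sum_restrict_apply] at hw
    rw [← U.starProjection_add_starProjection_orthogonal v]
    simp only [map_add, sum_add_distrib]
    refine norm_add_le_mul_of_inner_eq_zero (𝕜 := ℂ) (nu_nonneg A) ?_ ?_ hp hw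
    · exact Submodule.inner_right_of_mem_orthogonal (U.starProjection_apply_mem v)
        (Uᗮ.starProjection_apply_mem v)
    · exact Submodule.inner_right_of_mem_orthogonal
        (U.sum_mem fun a _ => hU a _ (U.starProjection_apply_mem v))
        (Uᗮ.sum_mem fun a _ => hU' a _ (Uᗮ.starProjection_apply_mem v))
  · push Not at hred
    rcases subsingleton_or_nontrivial H with hH | hH
    · simp [Subsingleton.elim v 0]
    refine norm_sum_le_nu_mul_of_irreducible (fun U hU => or_iff_not_imp_left.2 (hred U hU))
      ?_ A v
    obtain ⟨x, hx⟩ := exists_ne (0 : H)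
    by_contra! hπ
    exact hx (hfix x fun g => by simp [hπ g])

end Decomposition

section RegularRepresentation

variable (G : Type*) [Fintype G]

noncomputable def meanZero : Submodule ℂ (EuclideanSpace ℂ G) :=
  (ℂ ∙ WithLp.toLp 2 fun _ : G => (1 : ℂ))ᗮ

variable {G} in
lemma mem_meanZero_iff {v : EuclideanSpace ℂ G} : v ∈ meanZero G ↔ ∑ x, v x = 0 := by
  simp [meanZero, Submodule.mem_orthogonal_singleton_iff_inner_right, PiLp.inner_apply]

variable [Group G]

noncomputable def rightRegular : G →* (EuclideanSpace ℂ G ≃ₗᵢ[ℂ] EuclideanSpace ℂ G) where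
  toFun g := LinearIsometryEquiv.piLpCongrLeft 2 ℂ ℂ (Equiv.mulRight g⁻¹)
  map_one' := by
    ext f x
    simp only [inv_one, LinearIsometryEquiv.piLpCongrLeft_apply, Equiv.piCongrLeft'_apply,
      Equiv.mulRight_symm, Equiv.coe_mulRight, mul_one]
    rfl
  map_mul' g h := by
    ext f x
    simp only [LinearIsometryEquiv.coe_mul, Function.comp_apply,
      LinearIsometryEquiv.piLpCongrLeft_apply, Equiv.piCongrLeft'_apply, Equiv.mulRight_symm,
      Equiv.coe_mulRight, inv_inv, mul_assoc]

variable {G}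

@[simp]
lemma rightRegular_apply (g : G) (f : EuclideanSpace ℂ G) (x : G) :
    rightRegular G g f x = f (x * g) := by
  simp [rightRegular]

lemma isInvariantSubspace_meanZero : IsInvariantSubspace (rightRegular G) (meanZero G) := by
  refine IsInvariantSubspace.orthogonal fun g v hv => ?_
  obtain ⟨c, rfl⟩ := Submodule.mem_span_singleton.mp hv
  exact Submodule.mem_span_singleton.mpr ⟨c, by ext x; simp⟩

lemma eq_zero_of_rightRegular_fixed {f : meanZero G}
    (hf : ∀ g, isInvariantSubspace_meanZero.restrict g f = f) : f = 0 := by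
  have hconst : (f : EuclideanSpace ℂ G) ∈ ℂ ∙ WithLp.toLp 2 fun _ : G => (1 : ℂ) := by
    refine Submodule.mem_span_singleton.mpr ⟨f.1 1, ?_⟩
    ext x
    simpa using (congrArg (fun u : meanZero G => u.1 1) (hf x)).symm
  have := (Submodule.inf_orthogonal_eq_bot _).le (Submodule.mem_inf.mpr ⟨hconst, f.2⟩)
  exact Subtype.ext (by simpa using this)

theorem norm_sum_rightRegular_le (A : Finset G) (v : EuclideanSpace ℂ G) (hv : ∑ x, v x = 0) :
    ‖∑ a ∈ A, rightRegular G a v‖ ≤ nu G A * ‖v‖ := by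
  let w : meanZero G := ⟨v, mem_meanZero_iff.mpr hv⟩
  have hfix : ∀ f : meanZero G, (∀ g, isInvariantSubspace_meanZero.restrict g f = f) → f = 0 :=
    fun _ hf => eq_zero_of_rightRegular_fixed hf
  calc ‖∑ a ∈ A, rightRegular G a v‖
        = ‖∑ a ∈ A, isInvariantSubspace_meanZero.restrict a w‖ :=
        (isInvariantSubspace_meanZero.norm_sum_restrict_apply A w).symm
    _ ≤ nu G A * ‖w‖ := norm_sum_le_nu_mul _ hfix A w
    _ = nu G A * ‖v‖ := rfl

end RegularRepresentation

lemma norm_toLp_ofReal {ι : Type*} [Fintype ι] (f : ι → ℝ) :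
    ‖(WithLp.toLp 2 fun x => (f x : ℂ) : EuclideanSpace ℂ ι)‖ = √(∑ x, f x ^ 2) := by
  simp [EuclideanSpace.norm_eq]

section RealFunctions

variable {G : Type*} [Group G] [Fintype G]

theorem sum_sum_mul_inv_mul_le (A : Finset G) (f g : G → ℝ) (hg : ∑ x, g x = 0) :
    ∑ a ∈ A, ∑ x, f x * g (x⁻¹ * a) ≤ nu G A * √(∑ x, f x ^ 2) * √(∑ x, g x ^ 2) := by
  set u : EuclideanSpace ℂ G := WithLp.toLp 2 fun x => (f x⁻¹ : ℂ)
  set v : EuclideanSpace ℂ G := WithLp.toLp 2 fun x => (g x : ℂ)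
  have hinner : ∑ a ∈ A, ∑ x, f x * g (x⁻¹ * a) =
      RCLike.re (inner ℂ u (∑ a ∈ A, rightRegular G a v)) := by
    have h : RCLike.re (inner ℂ u (∑ a ∈ A, rightRegular G a v)) =
        ∑ a ∈ A, ∑ x, g (x * a) * f x⁻¹ := by
      simp [u, v, PiLp.inner_apply]
    rw [h]
    refine sum_congr rfl fun a _ => ?_
    rw [← Equiv.sum_comp (Equiv.inv G)]
    simp [mul_comm]
  have hu : ‖u‖ = √(∑ x, f x ^ 2) := by
    rw [norm_toLp_ofReal fun x => f x⁻¹]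
    exact congrArg _ (Equiv.sum_comp (Equiv.inv G) fun x => f x ^ 2)
  have hv : ∑ x, v x = 0 := by simp only [v]; exact_mod_cast hg
  calc ∑ a ∈ A, ∑ x, f x * g (x⁻¹ * a)
        = RCLike.re (inner ℂ u (∑ a ∈ A, rightRegular G a v)) := hinner
    _ ≤ ‖u‖ * ‖∑ a ∈ A, rightRegular G a v‖ := re_inner_le_norm _ _
    _ ≤ ‖u‖ * (nu G A * ‖v‖) := by gcongr; exact norm_sum_rightRegular_le A v hv
    _ = nu G A * √(∑ x, f x ^ 2) * √(∑ x, g x ^ 2) := by rw [hu, norm_toLp_ofReal]; ring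

end RealFunctions

section Centering

variable {ι : Type*} [Fintype ι] [Nonempty ι] (f : ι → ℝ)

lemma sum_sub_mean_eq_zero : ∑ x, (f x - (∑ y, f y) / Fintype.card ι) = 0 := by
  rw [sum_sub_distrib, sum_const, card_univ, nsmul_eq_mul, mul_div_cancel₀ _ (by positivity),
    sub_self]

lemma sum_sq_sub_mean_le : ∑ x, (f x - (∑ y, f y) / Fintype.card ι) ^ 2 ≤ ∑ x, f x ^ 2 := by
  have hn : (0 : ℝ) < Fintype.card ι := by positivity
  have h : ∑ x, (f x - (∑ y, f y) / Fintype.card ι) ^ 2 =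
      ∑ x, f x ^ 2 - (∑ y, f y) ^ 2 / Fintype.card ι := by
    simp only [sub_sq, sum_add_distrib, sum_sub_distrib, ← sum_mul, ← mul_sum, sum_const,
      card_univ, nsmul_eq_mul]
    field_simp
    ring
  rw [h]
  exact sub_le_self _ (by positivity)

end Centering

end BCC

theorem fourier_estimate_general
    (G : Type) [Group G] [Fintype G]
    (A : Finset G)
    (φ₁ φ₂ : G → ℝ) (hsum : (∑ x : G, φ₁ x) + (∑ x : G, φ₂ x) = 0) :
    ∑ a ∈ A, ∑ x : G, φ₁ x * φ₂ (x⁻¹ * a) ≤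
      nu G A * Real.sqrt (∑ x : G, φ₁ x ^ 2) * Real.sqrt (∑ x : G, φ₂ x ^ 2) := by
  set m := (∑ x, φ₂ x) / Fintype.card G with hm_def
  have hsplit : ∑ a ∈ A, ∑ x, φ₁ x * φ₂ (x⁻¹ * a) =
      ∑ a ∈ A, ∑ x, φ₁ x * (φ₂ (x⁻¹ * a) - m) + #A * (m * ∑ x, φ₁ x) := by
    simp only [mul_sub, sum_sub_distrib, ← sum_mul, sum_const, nsmul_eq_mul]
    ring
  have hm : m * ∑ x, φ₁ x = -(∑ x, φ₁ x) ^ 2 / Fintype.card G := by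
    rw [hm_def, show ∑ x, φ₂ x = -∑ x, φ₁ x by linarith]
    ring
  calc ∑ a ∈ A, ∑ x, φ₁ x * φ₂ (x⁻¹ * a)
      ≤ ∑ a ∈ A, ∑ x, φ₁ x * (φ₂ (x⁻¹ * a) - m) := by
        rw [hsplit, hm]
        exact add_le_of_nonpos_right (mul_nonpos_of_nonneg_of_nonpos (by positivity)
          (div_nonpos_of_nonpos_of_nonneg (neg_nonpos.mpr (sq_nonneg _)) (by positivity)))
    _ ≤ nu G A * √(∑ x, φ₁ x ^ 2) * √(∑ x, (φ₂ x - m) ^ 2) :=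
        sum_sum_mul_inv_mul_le A φ₁ (fun x => φ₂ x - m) (sum_sub_mean_eq_zero φ₂)
    _ ≤ nu G A * √(∑ x, φ₁ x ^ 2) * √(∑ x, φ₂ x ^ 2) := by
        have hν := nu_nonneg (G := G) A
        gcongr nu G A * √(∑ x, φ₁ x ^ 2) * √?_
        exact sum_sq_sub_mean_le φ₂

/-- **The key Fourier-analytic estimate (eq. (12) in the paper).**  Let `G` be a finite
group and `∅ ≠ A ⊆ G`.  Let `φ₁, φ₂ : G → ℝ` satisfy `∑_x φ₁(x) + ∑_x φ₂(x) = 0`.  Then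
`∑_{a ∈ A} ∑_{x ∈ G} φ₁(x)·φ₂(x⁻¹a) ≤ ν(A)·‖φ₁‖₂·‖φ₂‖₂`. -/
theorem fourier_estimate
    (G : Type) [Group G] [Fintype G] [DecidableEq G]
    (A : Finset G) (hA : A.Nonempty)
    (φ₁ φ₂ : G → ℝ) (hsum : (∑ x : G, φ₁ x) + (∑ x : G, φ₂ x) = 0) :
    ∑ a ∈ A, ∑ x : G, φ₁ x * φ₂ (x⁻¹ * a) ≤
      nu G A * Real.sqrt (∑ x : G, φ₁ x ^ 2) * Real.sqrt (∑ x : G, φ₂ x ^ 2) :=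
  fourier_estimate_general G A φ₁ φ₂ hsum
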